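/- arXiv:2106.12587 — 9 statements merged into one kernel-verified Lean document; each statement's English description precedes it below -/
import Mathlib

section
/- If a pure state |ψ⟩ on n qubits satisfies both Σ_P ⟨ψ|P|ψ⟩^{2α} = d and Σ_P ⟨ψ|P|ψ⟩^{2} = d for some α > 1, then the density matrix |ψ⟩⟨ψ| equals (1/d) Σ_{P∈S} φ_P P for some set S of d Pauli strings and signs φ_P ∈ {−1,+1}, i.e., |ψ⟩ is a stabilizer state. -/
open Matrix BigOperators

/-!
A Pauli string `P` is a Hermitian involution, so `(1 ∓ P)ᴴ (1 ∓ P) = 2 (1 ∓ P)` is positive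
semidefinite and every expectation `e_P = ⟨ψ|P|ψ⟩` lies in `[-1, 1]`. Hence
`(e_P ^ 2) ^ α ≤ e_P ^ 2`, with equality only when `e_P ^ 2 ∈ {0, 1}`, and equality of the two
sums forces equality termwise. The `d` indices with `e_P ^ 2 = 1` form `S`, the signs are
`φ_P = e_P`, and all other terms of the Pauli expansion of `ρ` vanish.
-/

open scoped ComplexOrder

theorem Matrix.IsHermitian.star_dotProduct_mulVec_le {𝕜 n : Type*} [RCLike 𝕜] [Fintype n]
    [DecidableEq n] {A : Matrix n n 𝕜} (hA : A.IsHermitian) (hA2 : A * A = 1) (ψ : n → 𝕜) :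
    star ψ ⬝ᵥ A *ᵥ ψ ≤ star ψ ⬝ᵥ ψ := by
  have hsq : (1 - A)ᴴ * (1 - A) = (2 : 𝕜) • (1 - A) := by
    rw [conjTranspose_sub, conjTranspose_one, hA.eq, sub_mul, mul_sub, mul_sub, hA2]
    simp only [mul_one, one_mul, two_smul]
    abel
  have hself : star ((1 - A) *ᵥ ψ) ⬝ᵥ (1 - A) *ᵥ ψ
      = 2 * (star ψ ⬝ᵥ ψ - star ψ ⬝ᵥ A *ᵥ ψ) := by
    rw [star_mulVec, ← dotProduct_mulVec, mulVec_mulVec, hsq, smul_mulVec, dotProduct_smul,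
      sub_mulVec, one_mulVec, dotProduct_sub, smul_eq_mul]
  have hnonneg :=
    mul_nonneg (inv_nonneg.mpr zero_le_two) (dotProduct_star_self_nonneg ((1 - A) *ᵥ ψ))
  rwa [hself, inv_mul_cancel_left₀ two_ne_zero, sub_nonneg] at hnonneg

theorem Matrix.IsHermitian.abs_le_one_of_star_dotProduct_mulVec_eq {n : Type*} [Fintype n]
    [DecidableEq n] {A : Matrix n n ℂ} (hA : A.IsHermitian) (hA2 : A * A = 1) {ψ : n → ℂ}
    (hψ : star ψ ⬝ᵥ ψ = 1) {r : ℝ} (hr : star ψ ⬝ᵥ A *ᵥ ψ = r) : |r| ≤ 1 := by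
  have hle := hA.star_dotProduct_mulVec_le hA2 ψ
  have hge := hA.neg.star_dotProduct_mulVec_le (by rwa [neg_mul_neg]) ψ
  rw [neg_mulVec, dotProduct_neg, hr, hψ, ← Complex.ofReal_neg, ← Complex.ofReal_one,
    Complex.real_le_real] at hge
  rw [hr, hψ, ← Complex.ofReal_one, Complex.real_le_real] at hle
  exact abs_le.mpr ⟨by linarith, hle⟩

theorem Matrix.trace_mul_vecMulVec_star {n R : Type*} [Fintype n] [CommSemiring R] [StarRing R]
    (A : Matrix n n R) (ψ : n → R) : trace (A * vecMulVec ψ (star ψ)) = star ψ ⬝ᵥ A *ᵥ ψ := by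
  rw [mul_vecMulVec, trace_vecMulVec, dotProduct_comm]

theorem Real.eq_zero_or_eq_one_of_rpow_eq_self {x α : ℝ} (hα : 1 < α) (h0 : 0 ≤ x) (h1 : x ≤ 1)
    (h : x ^ α = x) : x = 0 ∨ x = 1 := by
  by_contra! hx
  exact (Real.rpow_lt_self_of_lt_one (h0.lt_of_ne' hx.1) (h1.lt_of_ne hx.2) hα).ne h

theorem Finset.eq_zero_or_eq_one_of_sum_rpow_eq_sum {ι : Type*} {s : Finset ι} {x : ι → ℝ}
    {α : ℝ} (hα : 1 < α) (h0 : ∀ i ∈ s, 0 ≤ x i) (h1 : ∀ i ∈ s, x i ≤ 1)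
    (hsum : ∑ i ∈ s, x i ^ α = ∑ i ∈ s, x i) : ∀ i ∈ s, x i = 0 ∨ x i = 1 := by
  have hle : ∀ i ∈ s, x i ^ α ≤ x i := fun i hi ↦
    Real.rpow_le_self_of_le_one (h0 i hi) (h1 i hi) hα.le
  intro i hi
  exact Real.eq_zero_or_eq_one_of_rpow_eq_self hα (h0 i hi) (h1 i hi)
    ((Finset.sum_eq_sum_iff_of_le hle).mp hsum i hi)

theorem stmt_1_general (d : ℕ)
    (P : Fin (d ^ 2) → Matrix (Fin d) (Fin d) ℂ)
    (hherm : ∀ i, (P i).IsHermitian)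
    (hsq : ∀ i, P i * P i = 1)
    (ψ : Fin d → ℂ) (hψ : star ψ ⬝ᵥ ψ = 1)
    (ρ : Matrix (Fin d) (Fin d) ℂ) (hρ : ρ = Matrix.vecMulVec ψ (star ψ))
    (e : Fin (d ^ 2) → ℝ) (he : ∀ i, Matrix.trace (P i * ρ) = (e i : ℂ))
    (hexp : ρ = (d : ℂ)⁻¹ • ∑ i, (e i : ℂ) • P i)
    (α : ℝ) (hα : 1 < α)
    (hsum2α : ∑ i, ((e i) ^ 2) ^ α = (d : ℝ))
    (hsum2 : ∑ i, (e i) ^ 2 = (d : ℝ)) :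
    ∃ S : Finset (Fin (d ^ 2)), S.card = d ∧
      ∃ φ : Fin (d ^ 2) → ℝ, (∀ i ∈ S, φ i = 1 ∨ φ i = -1) ∧
        ρ = (d : ℂ)⁻¹ • ∑ i ∈ S, (φ i : ℂ) • P i := by
  have hsq_le : ∀ i ∈ Finset.univ, e i ^ 2 ≤ 1 := fun i _ ↦ by
    rw [sq_le_one_iff_abs_le_one]
    refine (hherm i).abs_le_one_of_star_dotProduct_mulVec_eq (hsq i) hψ ?_
    rw [← trace_mul_vecMulVec_star, ← hρ, he]
  have h01 := Finset.eq_zero_or_eq_one_of_sum_rpow_eq_sum hα (fun i _ ↦ sq_nonneg (e i)) hsq_le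
    (hsum2α.trans hsum2.symm)
  have hsupp : ∀ i, e i ≠ 0 → e i ^ 2 = 1 := fun i hi ↦
    (h01 i (Finset.mem_univ i)).resolve_left (pow_ne_zero 2 hi)
  set S := Finset.univ.filter fun i ↦ e i ^ 2 = 1
  have hsum_S : ∀ {M : Type} [AddCommMonoid M] (f : Fin (d ^ 2) → M),
      (∀ i, e i = 0 → f i = 0) → ∑ i ∈ S, f i = ∑ i, f i := fun f hf ↦
    Finset.sum_filter_of_ne fun i _ hi ↦ hsupp i (mt (hf i) hi)
  refine ⟨S, ?_, e, fun i hi ↦ sq_eq_one_iff.mp (Finset.mem_filter.mp hi).2, ?_⟩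
  · have hcard : (S.card : ℝ) = ∑ i ∈ S, e i ^ 2 := by
      rw [Finset.card_eq_sum_ones, Nat.cast_sum, Nat.cast_one]
      exact Finset.sum_congr rfl fun i hi ↦ (Finset.mem_filter.mp hi).2.symm
    exact_mod_cast hcard.trans ((hsum_S _ fun i hi ↦ by simp [hi]).trans hsum2)
  · rw [hexp, hsum_S _ fun i hi ↦ by simp [hi]]

/-- If a pure state |ψ⟩ on n qubits satisfies ∑_P ⟨ψ|P|ψ⟩^{2α} = d and
∑_P ⟨ψ|P|ψ⟩² = d for some α > 1, then |ψ⟩⟨ψ| = d⁻¹ ∑_{P∈S} φ_P P for a set S of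
d Pauli strings and signs φ_P = ±1, i.e. |ψ⟩ is a stabilizer state. -/
theorem stmt_1 (n : ℕ) (hn : 1 ≤ n) (d : ℕ) (hd : d = 2 ^ n)
    (P : Fin (d ^ 2) → Matrix (Fin d) (Fin d) ℂ)
    (hherm : ∀ i, (P i).IsHermitian)
    (hsq : ∀ i, P i * P i = 1)
    (horth : ∀ i j, Matrix.trace (P i * P j) = if i = j then (d : ℂ) else 0)
    (ψ : Fin d → ℂ) (hψ : star ψ ⬝ᵥ ψ = 1)
    (ρ : Matrix (Fin d) (Fin d) ℂ) (hρ : ρ = Matrix.vecMulVec ψ (star ψ))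
    (e : Fin (d ^ 2) → ℝ) (he : ∀ i, Matrix.trace (P i * ρ) = (e i : ℂ))
    (hexp : ρ = (d : ℂ)⁻¹ • ∑ i, (e i : ℂ) • P i)
    (α : ℝ) (hα : 1 < α)
    (hsum2α : ∑ i, ((e i) ^ 2) ^ α = (d : ℝ))
    (hsum2 : ∑ i, (e i) ^ 2 = (d : ℝ)) :
    ∃ S : Finset (Fin (d ^ 2)), S.card = d ∧
      ∃ φ : Fin (d ^ 2) → ℝ, (∀ i ∈ S, φ i = 1 ∨ φ i = -1) ∧
        ρ = (d : ℂ)⁻¹ • ∑ i ∈ S, (φ i : ℂ) • P i :=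
  stmt_1_general d P hherm hsq ψ hψ ρ hρ e he hexp α hα hsum2α hsum2
end

section
/- The stabilizer α-Rényi entropy is invariant under Clifford unitaries: for any Clifford operator C on n qubits and any pure state |ψ⟩, M_α(C|ψ⟩) = M_α(|ψ⟩). -/
open Matrix BigOperators

/-- The stabilizer α-Rényi entropy is invariant under Clifford unitaries:
for a Clifford operator C (a unitary conjugating every Pauli string to a signed Pauli
string, permuting them bijectively), M_α(CρC†) = M_α(ρ) for a pure state ρ = |ψ⟩⟨ψ|. -/
theorem stmt_2 (n : ℕ) (hn : 1 ≤ n) (d : ℕ) (hd : d = 2 ^ n)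
    (P : Fin (d ^ 2) → Matrix (Fin d) (Fin d) ℂ)
    (hherm : ∀ i, (P i).IsHermitian)
    (hsq : ∀ i, P i * P i = 1)
    (horth : ∀ i j, Matrix.trace (P i * P j) = if i = j then (d : ℂ) else 0)
    (ψ : Fin d → ℂ) (hψ : star ψ ⬝ᵥ ψ = 1)
    (ρ : Matrix (Fin d) (Fin d) ℂ) (hρ : ρ = Matrix.vecMulVec ψ (star ψ))
    (C : Matrix (Fin d) (Fin d) ℂ) (hC : C ∈ Matrix.unitaryGroup (Fin d) ℂ)
    (π : Equiv.Perm (Fin (d ^ 2))) (s : Fin (d ^ 2) → ℝ)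
    (hs : ∀ i, s i = 1 ∨ s i = -1)
    (hcliff : ∀ i, Cᴴ * P i * C = (s i : ℂ) • P (π i))
    (α : ℝ) (hα : 0 < α) (hα1 : α ≠ 1) :
    (1 - α)⁻¹ * Real.log ((d : ℝ) ^ (-α) *
        ∑ i, ((Matrix.trace (P i * (C * ρ * Cᴴ))).re ^ 2) ^ α) - Real.log d =
    (1 - α)⁻¹ * Real.log ((d : ℝ) ^ (-α) *
        ∑ i, ((Matrix.trace (P i * ρ)).re ^ 2) ^ α) - Real.log d := by
  have key : ∀ i, ((Matrix.trace (P i * (C * ρ * Cᴴ))).re ^ 2) ^ α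
      = ((Matrix.trace (P (π i) * ρ)).re ^ 2) ^ α := by
    intro i
    have h1 : Matrix.trace (P i * (C * ρ * Cᴴ))
        = Matrix.trace ((Cᴴ * P i * C) * ρ) := by
      have : P i * (C * ρ * Cᴴ) = (P i * C * ρ) * Cᴴ := by
        simp [mul_assoc]
      rw [this, Matrix.trace_mul_comm]
      simp [mul_assoc]
    rw [h1, hcliff i, Matrix.smul_mul, Matrix.trace_smul]
    have hre : (((s i : ℂ)) • Matrix.trace (P (π i) * ρ)).re
        = s i * (Matrix.trace (P (π i) * ρ)).re := by
      simp [Complex.smul_re]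
    rw [hre]
    have hs2 : (s i) ^ 2 = 1 := by rcases hs i with h | h <;> simp [h]
    have : (s i * (Matrix.trace (P (π i) * ρ)).re) ^ 2
        = (Matrix.trace (P (π i) * ρ)).re ^ 2 := by
      rw [mul_pow, hs2, one_mul]
    rw [this]
  have hsum : ∑ i, ((Matrix.trace (P i * (C * ρ * Cᴴ))).re ^ 2) ^ α
      = ∑ i, ((Matrix.trace (P i * ρ)).re ^ 2) ^ α := by
    calc ∑ i, ((Matrix.trace (P i * (C * ρ * Cᴴ))).re ^ 2) ^ α
        = ∑ i, ((Matrix.trace (P (π i) * ρ)).re ^ 2) ^ α := by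
          exact Finset.sum_congr rfl fun i _ => key i
      _ = ∑ i, ((Matrix.trace (P i * ρ)).re ^ 2) ^ α :=
          Equiv.sum_comp π (fun j => ((Matrix.trace (P j * ρ)).re ^ 2) ^ α)
  rw [hsum]
end

section
/- The stabilizer α-Rényi entropy is additive under tensor products: M_α(|ψ⟩⊗|φ⟩) = M_α(|ψ⟩) + M_α(|φ⟩). -/
open Matrix BigOperators Kronecker

/-- The stabilizer α-Rényi entropy is additive under tensor products:
M_α(|ψ⟩⊗|φ⟩) = M_α(|ψ⟩) + M_α(|φ⟩), where the Pauli strings on the joint system are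
the Kronecker products P₁ ⊗ P₂ of Pauli strings on the factors. -/
theorem stmt_3 (n₁ n₂ : ℕ) (hn₁ : 1 ≤ n₁) (hn₂ : 1 ≤ n₂)
    (d₁ d₂ : ℕ) (hd₁ : d₁ = 2 ^ n₁) (hd₂ : d₂ = 2 ^ n₂)
    (P₁ : Fin (d₁ ^ 2) → Matrix (Fin d₁) (Fin d₁) ℂ)
    (P₂ : Fin (d₂ ^ 2) → Matrix (Fin d₂) (Fin d₂) ℂ)
    (hherm₁ : ∀ i, (P₁ i).IsHermitian) (hherm₂ : ∀ j, (P₂ j).IsHermitian)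
    (hsq₁ : ∀ i, P₁ i * P₁ i = 1) (hsq₂ : ∀ j, P₂ j * P₂ j = 1)
    (horth₁ : ∀ i j, Matrix.trace (P₁ i * P₁ j) = if i = j then (d₁ : ℂ) else 0)
    (horth₂ : ∀ i j, Matrix.trace (P₂ i * P₂ j) = if i = j then (d₂ : ℂ) else 0)
    (ρ₁ : Matrix (Fin d₁) (Fin d₁) ℂ) (ρ₂ : Matrix (Fin d₂) (Fin d₂) ℂ)
    (e₁ : Fin (d₁ ^ 2) → ℝ) (e₂ : Fin (d₂ ^ 2) → ℝ)
    (he₁ : ∀ i, Matrix.trace (P₁ i * ρ₁) = (e₁ i : ℂ))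
    (he₂ : ∀ j, Matrix.trace (P₂ j * ρ₂) = (e₂ j : ℂ))
    (hpure₁ : ∑ i, (e₁ i) ^ 2 = (d₁ : ℝ))
    (hpure₂ : ∑ j, (e₂ j) ^ 2 = (d₂ : ℝ))
    (α : ℝ) (hα : 0 < α) (hα1 : α ≠ 1) :
    (1 - α)⁻¹ * Real.log (((d₁ * d₂ : ℕ) : ℝ) ^ (-α) *
        ∑ p : Fin (d₁ ^ 2) × Fin (d₂ ^ 2),
          ((Matrix.trace ((P₁ p.1 ⊗ₖ P₂ p.2) * (ρ₁ ⊗ₖ ρ₂))).re ^ 2) ^ α)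
      - Real.log ((d₁ * d₂ : ℕ) : ℝ) =
    ((1 - α)⁻¹ * Real.log ((d₁ : ℝ) ^ (-α) * ∑ i, ((e₁ i) ^ 2) ^ α) - Real.log d₁) +
    ((1 - α)⁻¹ * Real.log ((d₂ : ℝ) ^ (-α) * ∑ j, ((e₂ j) ^ 2) ^ α) - Real.log d₂) := by

  have hd₁pos : (0:ℝ) < d₁ := by
    rw [hd₁]; positivity
  have hd₂pos : (0:ℝ) < d₂ := by
    rw [hd₂]; positivity
  have htr : ∀ (i : Fin (d₁^2)) (j : Fin (d₂^2)),
      (Matrix.trace ((P₁ i ⊗ₖ P₂ j) * (ρ₁ ⊗ₖ ρ₂))).re = e₁ i * e₂ j := by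
    intro i j
    rw [← Matrix.mul_kronecker_mul, Matrix.trace_kronecker, he₁, he₂,
      ← Complex.ofReal_mul, Complex.ofReal_re]
  have hsum : (∑ p : Fin (d₁ ^ 2) × Fin (d₂ ^ 2),
          ((Matrix.trace ((P₁ p.1 ⊗ₖ P₂ p.2) * (ρ₁ ⊗ₖ ρ₂))).re ^ 2) ^ α)
      = (∑ i, ((e₁ i)^2)^α) * (∑ j, ((e₂ j)^2)^α) := by
    rw [Finset.sum_mul_sum, Fintype.sum_prod_type]
    refine Finset.sum_congr rfl fun i _ => Finset.sum_congr rfl fun j _ => ?_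
    rw [htr, mul_pow, Real.mul_rpow (sq_nonneg _) (sq_nonneg _)]
  have hS : ∀ (m : ℕ) (e : Fin m → ℝ), (∑ i, (e i)^2) ≠ 0 →
      0 < ∑ i, ((e i)^2)^α := by
    intro m e hne
    have : ∃ i ∈ Finset.univ, e i ≠ 0 := by
      by_contra h
      push_neg at h
      exact hne (Finset.sum_eq_zero fun i hi => by rw [h i hi]; ring)
    obtain ⟨i, hi, hei⟩ := this
    refine Finset.sum_pos' (fun j _ => Real.rpow_nonneg (sq_nonneg _) _) ⟨i, hi, ?_⟩
    exact Real.rpow_pos_of_pos (by positivity) _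
  have hS₁ : 0 < ∑ i, ((e₁ i)^2)^α := hS _ _ (by rw [hpure₁]; exact ne_of_gt hd₁pos)
  have hS₂ : 0 < ∑ j, ((e₂ j)^2)^α := hS _ _ (by rw [hpure₂]; exact ne_of_gt hd₂pos)
  have hr₁ : (0:ℝ) < (d₁:ℝ) ^ (-α) := Real.rpow_pos_of_pos hd₁pos _
  have hr₂ : (0:ℝ) < (d₂:ℝ) ^ (-α) := Real.rpow_pos_of_pos hd₂pos _
  rw [hsum, Nat.cast_mul, Real.mul_rpow hd₁pos.le hd₂pos.le,
    Real.log_mul (by positivity) (ne_of_gt hd₂pos),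
    show ((d₁:ℝ)^(-α) * (d₂:ℝ)^(-α)) * ((∑ i, ((e₁ i)^2)^α) * (∑ j, ((e₂ j)^2)^α))
      = ((d₁:ℝ)^(-α) * ∑ i, ((e₁ i)^2)^α) * ((d₂:ℝ)^(-α) * ∑ j, ((e₂ j)^2)^α) by ring,
    Real.log_mul (by positivity) (by positivity)]
  ring
end

section
/- For any pure state |ψ⟩ on n qubits, the number of Pauli strings P with P|ψ⟩ = ±|ψ⟩ is at most d²/card(|ψ⟩), where card(|ψ⟩) is the number of Pauli strings with nonzero expectation ⟨ψ|P|ψ⟩ ≠ 0. -/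
open Matrix BigOperators

/-- The four single-qubit Pauli matrices I, X, Y, Z. -/
noncomputable def pauli : Fin 4 → Matrix (Fin 2) (Fin 2) ℂ :=
  ![1, !![0, 1; 1, 0], !![0, -Complex.I; Complex.I, 0], !![1, 0; 0, -1]]

/-- The n-qubit Pauli string labelled by a : Fin n → Fin 4, acting on (ℂ²)^⊗n realized
as functions (Fin n → Fin 2) → ℂ; its (x,y) entry is the product of single-qubit entries. -/
noncomputable def PauliString (n : ℕ) (a : Fin n → Fin 4) :
    Matrix (Fin n → Fin 2) (Fin n → Fin 2) ℂ :=
  Matrix.of fun x y => ∏ j, pauli (a j) (x j) (y j)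

/-!
Up to a phase, the Pauli string with label `a` is `X^x Z^z` for a vector `(x, z) ∈ 𝔽₂ⁿ × 𝔽₂ⁿ`,
and two strings commute or anticommute according to the standard symplectic form `ω` of these
vectors. If `P_a ψ = ±ψ` and `P_b` anticommutes with `P_a`, then `⟨ψ|P_b|ψ⟩ = -⟨ψ|P_b|ψ⟩`; so the
labels of the stabilizer are `ω`-orthogonal to the labels of nonzero expectation. As `ω` is
nondegenerate, the span `W` of the stabilizer labels satisfies `|W| · |W^⊥| = 4ⁿ = d²`.
-/

theorem AddChar.map_sum_eq_prod {ι A M : Type*} [AddCommMonoid A] [CommMonoid M]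
    (ψ : AddChar A M) (s : Finset ι) (f : ι → A) :
    ψ (∑ i ∈ s, f i) = ∏ i ∈ s, ψ (f i) := by
  classical
  induction s using Finset.induction_on with
  | empty => simp
  | insert i s hi ih =>
    rw [Finset.sum_insert hi, AddChar.map_add_eq_mul, ih, Finset.prod_insert hi]

namespace Matrix

section KroneckerPi

variable {ι m R : Type*} [Fintype ι] [CommSemiring R]

def kroneckerPi (M : ι → Matrix m m R) : Matrix (ι → m) (ι → m) R :=
  of fun x y => ∏ i, M i (x i) (y i)

theorem kroneckerPi_mul [DecidableEq ι] [Fintype m] (M N : ι → Matrix m m R) :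
    kroneckerPi M * kroneckerPi N = kroneckerPi fun i => M i * N i := by
  ext x y
  simp only [kroneckerPi, mul_apply, of_apply, ← Finset.prod_mul_distrib]
  rw [Finset.prod_univ_sum]
  rfl

theorem kroneckerPi_smul (c : ι → R) (M : ι → Matrix m m R) :
    kroneckerPi (fun i => c i • M i) = (∏ i, c i) • kroneckerPi M := by
  ext x y
  simp [kroneckerPi, Finset.prod_mul_distrib]

theorem kroneckerPi_one [DecidableEq m] :
    kroneckerPi (fun _ : ι => (1 : Matrix m m R)) = 1 := by
  ext x y
  simp [kroneckerPi, one_apply, Finset.prod_ite_zero, funext_iff]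

theorem conjTranspose_kroneckerPi [StarRing R] (M : ι → Matrix m m R) :
    (kroneckerPi M)ᴴ = kroneckerPi fun i => (M i)ᴴ := by
  ext x y
  simp [kroneckerPi]

end KroneckerPi

theorem dotProduct_mulVec_eq_zero_of_anticommute {m 𝕜 : Type*} [Fintype m] [Field 𝕜]
    [CharZero 𝕜] [StarRing 𝕜] {A B : Matrix m m 𝕜} (hA : A.IsHermitian)
    (hAB : B * A = -(A * B)) {ψ : m → 𝕜} (hψ : A *ᵥ ψ = ψ ∨ A *ᵥ ψ = -ψ) :
    star ψ ⬝ᵥ B *ᵥ ψ = 0 := by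
  have hAB_eq : star ψ ⬝ᵥ (A * B) *ᵥ ψ = star (A *ᵥ ψ) ⬝ᵥ B *ᵥ ψ := by
    rw [← mulVec_mulVec, dotProduct_mulVec, star_mulVec, hA.eq]
  have hBA_eq : star ψ ⬝ᵥ (B * A) *ᵥ ψ = star ψ ⬝ᵥ B *ᵥ (A *ᵥ ψ) := by
    rw [← mulVec_mulVec]
  rw [hAB, neg_mulVec, dotProduct_neg, hAB_eq] at hBA_eq
  rcases hψ with h | h <;>
    simp only [h, star_neg, mulVec_neg, dotProduct_neg, neg_dotProduct, neg_neg] at hBA_eq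
  · exact CharZero.neg_eq_self_iff.mp hBA_eq
  · exact CharZero.eq_neg_self_iff.mp hBA_eq

theorem nondegenerate_toBilin'_J (l K : Type*) [Fintype l] [DecidableEq l] [Field K] :
    LinearMap.BilinForm.Nondegenerate (J l K).toBilin' :=
  LinearMap.BilinForm.nondegenerate_toBilin'_of_det_ne_zero' _ (isUnit_det_J l K).ne_zero

end Matrix

namespace LinearMap.BilinForm

variable {K V : Type*} [Field K] [AddCommGroup V] [Module K V] [FiniteDimensional K V]
  {B : LinearMap.BilinForm K V}

theorem natCard_mul_natCard_orthogonal (hB : B.Nondegenerate) (W : Submodule K V) :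
    Nat.card W * Nat.card (B.orthogonal W) = Nat.card V := by
  rw [Module.natCard_eq_pow_finrank (K := K) (V := W),
    Module.natCard_eq_pow_finrank (K := K) (V := B.orthogonal W),
    Module.natCard_eq_pow_finrank (K := K) (V := V), ← pow_add, finrank_orthogonal hB,
    Nat.add_sub_cancel' (Submodule.finrank_le W)]

theorem ncard_mul_ncard_le [Finite K] (hB : B.Nondegenerate) {S C : Set V}
    (hSC : ∀ a ∈ S, ∀ b ∈ C, B a b = 0) : S.ncard * C.ncard ≤ Nat.card V := by
  have : Finite V := Module.finite_of_finite K
  have hC : C ⊆ B.orthogonal (Submodule.span K S) := fun b hb =>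
    B.mem_orthogonal_iff.2 fun a ha =>
      (Submodule.span_le (p := LinearMap.ker (B.flip b))).2 (fun a' ha' => hSC a' ha' b hb) ha
  rw [← B.natCard_mul_natCard_orthogonal hB (Submodule.span K S)]
  exact Nat.mul_le_mul (Set.ncard_le_ncard Submodule.subset_span) (Set.ncard_le_ncard hC)

end LinearMap.BilinForm

noncomputable def paritySign : AddChar (ZMod 2) ℂ := AddChar.zmodChar 2 neg_one_sq

theorem paritySign_one : paritySign 1 = -1 := by
  simp [paritySign, AddChar.zmodChar_apply, ZMod.val_one]

theorem paritySign_eq_neg_one {x : ZMod 2} (hx : x ≠ 0) : paritySign x = -1 := by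
  fin_cases x
  exacts [absurd rfl hx, paritySign_one]

-- `pauli s` is `X ^ xBit s * Z ^ zBit s` up to a phase.
def xBit : Fin 4 → ZMod 2 := ![0, 1, 1, 0]

def zBit : Fin 4 → ZMod 2 := ![0, 0, 1, 1]

theorem conjTranspose_pauli (s : Fin 4) : (pauli s)ᴴ = pauli s := by
  fin_cases s <;> ext i j <;> fin_cases i <;> fin_cases j <;> simp [pauli]

theorem pauli_mul_comm (s t : Fin 4) :
    pauli t * pauli s = paritySign (xBit s * zBit t + zBit s * xBit t) • (pauli s * pauli t) := by
  fin_cases s <;> fin_cases t <;> ext i j <;> fin_cases i <;> fin_cases j <;>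
    simp [pauli, xBit, zBit, paritySign_one, CharTwo.add_self_eq_zero]

section PauliString

variable {n : ℕ}

def symplecticVector (a : Fin n → Fin 4) : Fin n ⊕ Fin n → ZMod 2 :=
  Sum.elim (fun j => xBit (a j)) (fun j => zBit (a j))

theorem symplecticVector_injective : Function.Injective (symplecticVector (n := n)) := by
  intro a b h
  funext j
  have hx := congrFun h (Sum.inl j)
  have hz := congrFun h (Sum.inr j)
  simp only [symplecticVector, Sum.elim_inl, Sum.elim_inr] at hx hz
  revert hx hz
  generalize a j = s
  generalize b j = t
  revert s t
  decide

theorem toBilin'_J_symplecticVector (a b : Fin n → Fin 4) :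
    (J (Fin n) (ZMod 2)).toBilin' (symplecticVector a) (symplecticVector b) =
      ∑ j, (xBit (a j) * zBit (b j) + zBit (a j) * xBit (b j)) := by
  simp [toBilin'_apply', symplecticVector, J, fromBlocks_mulVec, neg_mulVec, dotProduct,
    Finset.sum_add_distrib, mul_comm]

theorem pauliString_eq_kroneckerPi (a : Fin n → Fin 4) :
    PauliString n a = kroneckerPi fun j => pauli (a j) := rfl

theorem pauliString_zero : PauliString n 0 = 1 := kroneckerPi_one

theorem isHermitian_pauliString (a : Fin n → Fin 4) : (PauliString n a).IsHermitian := by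
  simp only [IsHermitian, pauliString_eq_kroneckerPi, conjTranspose_kroneckerPi,
    conjTranspose_pauli]

theorem pauliString_mul_comm (a b : Fin n → Fin 4) :
    PauliString n b * PauliString n a =
      paritySign ((J (Fin n) (ZMod 2)).toBilin' (symplecticVector a) (symplecticVector b)) •
        (PauliString n a * PauliString n b) := by
  rw [pauliString_eq_kroneckerPi, pauliString_eq_kroneckerPi, kroneckerPi_mul, kroneckerPi_mul,
    toBilin'_J_symplecticVector, AddChar.map_sum_eq_prod, ← kroneckerPi_smul]
  exact congrArg kroneckerPi (funext fun j => pauli_mul_comm (a j) (b j))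

theorem toBilin'_J_symplecticVector_eq_zero {ψ : (Fin n → Fin 2) → ℂ} {a b : Fin n → Fin 4}
    (ha : PauliString n a *ᵥ ψ = ψ ∨ PauliString n a *ᵥ ψ = -ψ)
    (hb : star ψ ⬝ᵥ PauliString n b *ᵥ ψ ≠ 0) :
    (J (Fin n) (ZMod 2)).toBilin' (symplecticVector a) (symplecticVector b) = 0 := by
  by_contra h
  refine hb (dotProduct_mulVec_eq_zero_of_anticommute (isHermitian_pauliString a) ?_ ha)
  rw [pauliString_mul_comm, paritySign_eq_neg_one h, neg_one_smul]

end PauliString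

/-- For any pure state |ψ⟩ on n qubits (d = 2^n), the number of Pauli
strings with P|ψ⟩ = ±|ψ⟩ is at most d² / card(|ψ⟩), where card(|ψ⟩) is the number of
Pauli strings with nonzero expectation ⟨ψ|P|ψ⟩ ≠ 0. -/
theorem stmt_4 (n : ℕ) (ψ : (Fin n → Fin 2) → ℂ) (hψ : star ψ ⬝ᵥ ψ = 1) :
    (Set.ncard {a : Fin n → Fin 4 |
        (PauliString n a).mulVec ψ = ψ ∨ (PauliString n a).mulVec ψ = -ψ} : ℝ) ≤
      ((2 ^ n : ℝ) ^ 2) /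
        (Set.ncard {a : Fin n → Fin 4 | star ψ ⬝ᵥ (PauliString n a).mulVec ψ ≠ 0} : ℝ) := by
  set S := {a : Fin n → Fin 4 | PauliString n a *ᵥ ψ = ψ ∨ PauliString n a *ᵥ ψ = -ψ}
  set C := {a : Fin n → Fin 4 | star ψ ⬝ᵥ PauliString n a *ᵥ ψ ≠ 0}
  have hC : (0 : Fin n → Fin 4) ∈ C := by simp [C, pauliString_zero, hψ]
  have hcount : S.ncard * C.ncard ≤ 4 ^ n :=
    calc S.ncard * C.ncard
        = (symplecticVector '' S).ncard * (symplecticVector '' C).ncard := by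
          rw [Set.ncard_image_of_injective _ symplecticVector_injective,
            Set.ncard_image_of_injective _ symplecticVector_injective]
      _ ≤ Nat.card (Fin n ⊕ Fin n → ZMod 2) := by
          refine LinearMap.BilinForm.ncard_mul_ncard_le (nondegenerate_toBilin'_J _ _) ?_
          rintro _ ⟨a, ha, rfl⟩ _ ⟨b, hb, rfl⟩
          exact toBilin'_J_symplecticVector_eq_zero ha hb
      _ = 4 ^ n := by simp [← two_mul, pow_mul]
  rw [le_div_iff₀ (by exact_mod_cast (Set.ncard_pos).2 ⟨0, hC⟩)]
  calc (S.ncard * C.ncard : ℝ) ≤ 4 ^ n := by exact_mod_cast hcount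
    _ = (2 ^ n) ^ 2 := by rw [← pow_mul, mul_comm, pow_mul]; norm_num
end

section
/- For any pure state |ψ⟩ on n qubits, M₀(|ψ⟩) := log(card(|ψ⟩)/d) ≤ ν(|ψ⟩) := log(d/|St(|ψ⟩)|), i.e., the stabilizer 0-Rényi entropy is bounded above by the stabilizer nullity. -/
open Matrix BigOperators

def padd : Fin 4 → Fin 4 → Fin 4 := fun k l =>
  ![![0,1,2,3],![1,0,3,2],![2,3,0,1],![3,2,1,0]] k l

noncomputable def pphase : Fin 4 → Fin 4 → ℂ := fun k l =>
  ![![1,1,1,1],![1,1,Complex.I,-Complex.I],![1,-Complex.I,1,Complex.I],![1,Complex.I,-Complex.I,1]] k l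

def pcomm : Fin 4 → Fin 4 → ℤ := fun k l => if k = 0 ∨ l = 0 ∨ k = l then 1 else -1

lemma pauli_mul (k l : Fin 4) : pauli k * pauli l = pphase k l • pauli (padd k l) := by
  fin_cases k <;> fin_cases l <;>
    ext i j <;> fin_cases i <;> fin_cases j <;>
    simp [pauli, padd, pphase, Matrix.mul_apply, Matrix.one_apply, Fin.sum_univ_succ,
      Matrix.vecHead, Matrix.vecTail, Complex.ext_iff]

lemma pauli_herm (k : Fin 4) : (pauli k)ᴴ = pauli k := by
  fin_cases k <;>
    ext i j <;> fin_cases i <;> fin_cases j <;>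
    simp [pauli, Matrix.conjTranspose_apply, Matrix.one_apply, Matrix.vecHead, Matrix.vecTail,
      Complex.ext_iff]

lemma pphase_sym (k l : Fin 4) : pphase k l = (pcomm k l : ℂ) * pphase l k := by
  fin_cases k <;> fin_cases l <;>
    simp [pphase, pcomm, Matrix.vecHead, Matrix.vecTail] <;> ring

lemma pphase_ne_zero (k l : Fin 4) : pphase k l ≠ 0 := by
  fin_cases k <;> fin_cases l <;>
    simp [pphase, Matrix.vecHead, Matrix.vecTail, Complex.I_ne_zero]

lemma pphase_self (k : Fin 4) : pphase k k = 1 := by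
  fin_cases k <;> simp [pphase, Matrix.vecHead, Matrix.vecTail]

lemma padd_self : ∀ k : Fin 4, padd k k = 0 := by decide
lemma padd_cancel : ∀ k l : Fin 4, padd (padd k l) l = k := by decide
lemma pcomm_hom : ∀ k l m : Fin 4, pcomm k (padd l m) = pcomm k l * pcomm k m := by decide
lemma pcomm_sq : ∀ k l : Fin 4, pcomm k l = 1 ∨ pcomm k l = -1 := by decide
lemma pcomm_colsum : ∀ l : Fin 4, (∑ k : Fin 4, pcomm k l) = if l = 0 then 4 else 0 := by decide

lemma sum_prod_eval {n : ℕ} {κ : Type*} [Fintype κ] {β : Type*} [CommSemiring β]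
    (f : Fin n → κ → β) :
    ∑ z : Fin n → κ, ∏ j, f j (z j) = ∏ j, ∑ t : κ, f j t :=
  (Fintype.prod_sum f).symm

lemma PS_mul {n : ℕ} (a b : Fin n → Fin 4) :
    PauliString n a * PauliString n b
      = (∏ j, pphase (a j) (b j)) • PauliString n (fun j => padd (a j) (b j)) := by
  ext x y
  simp only [Matrix.mul_apply, PauliString, Matrix.of_apply, Matrix.smul_apply, smul_eq_mul,
    ← Finset.prod_mul_distrib]
  rw [sum_prod_eval (fun j t => pauli (a j) (x j) t * pauli (b j) t (y j))]
  refine Finset.prod_congr rfl fun j _ => ?_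
  have h := congrFun (congrFun (pauli_mul (a j) (b j)) (x j)) (y j)
  simpa [Matrix.mul_apply] using h

lemma PS_zero {n : ℕ} : PauliString n (fun _ => 0) = 1 := by
  ext x y
  have h0 : pauli (0 : Fin 4) = 1 := by simp [pauli]
  simp only [PauliString, Matrix.of_apply, h0]
  simp only [Matrix.one_apply]
  by_cases h : x = y
  · subst h; simp
  · have : ∃ j, x j ≠ y j := by
      by_contra hc; push_neg at hc; exact h (funext hc)
    obtain ⟨j, hj⟩ := this
    rw [if_neg h]
    exact Finset.prod_eq_zero (Finset.mem_univ j) (by simp [hj])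

lemma PS_herm {n : ℕ} (a : Fin n → Fin 4) : (PauliString n a)ᴴ = PauliString n a := by
  ext x y
  simp only [Matrix.conjTranspose_apply, PauliString, Matrix.of_apply, star_prod]
  refine Finset.prod_congr rfl fun j _ => ?_
  have := congrFun (congrFun (pauli_herm (a j)) (x j)) (y j)
  simpa [Matrix.conjTranspose_apply] using this

lemma PS_sq {n : ℕ} (a : Fin n → Fin 4) : PauliString n a * PauliString n a = 1 := by
  rw [PS_mul]
  simp [pphase_self, padd_self, PS_zero]

lemma PS_commute {n : ℕ} (a b : Fin n → Fin 4) :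
    PauliString n a * PauliString n b
      = ((∏ j, pcomm (a j) (b j) : ℤ) : ℂ) • (PauliString n b * PauliString n a) := by
  rw [PS_mul a b, PS_mul b a]
  have h : ∀ j : Fin n, padd (a j) (b j) = padd (b j) (a j) := by
    intro j; revert a b
    have : ∀ k l : Fin 4, padd k l = padd l k := by decide
    intro a b; exact this _ _
  have : (fun j => padd (a j) (b j)) = (fun j => padd (b j) (a j)) := funext h
  rw [this, smul_smul]
  congr 1
  push_cast
  rw [← Finset.prod_mul_distrib]
  exact Finset.prod_congr rfl fun j _ => pphase_sym _ _

section Main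
variable {n : ℕ} {ψ : (Fin n → Fin 2) → ℂ}

lemma eigen_of_stab {s : Fin n → Fin 4}
    (hs : (PauliString n s).mulVec ψ = ψ ∨ (PauliString n s).mulVec ψ = -ψ) :
    ∃ ε : ℂ, (ε = 1 ∨ ε = -1) ∧ (PauliString n s).mulVec ψ = ε • ψ := by
  rcases hs with h | h
  · exact ⟨1, Or.inl rfl, by simpa using h⟩
  · exact ⟨-1, Or.inr rfl, by simpa using h⟩

lemma psi_ne_zero (hψ : star ψ ⬝ᵥ ψ = 1) : ψ ≠ 0 := by
  intro h
  rw [h] at hψ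
  simp [dotProduct] at hψ

lemma stab_closed (hψ : star ψ ⬝ᵥ ψ = 1) {s s' : Fin n → Fin 4}
    (hs : (PauliString n s).mulVec ψ = ψ ∨ (PauliString n s).mulVec ψ = -ψ)
    (hs' : (PauliString n s').mulVec ψ = ψ ∨ (PauliString n s').mulVec ψ = -ψ) :
    (PauliString n (fun j => padd (s j) (s' j))).mulVec ψ = ψ ∨
      (PauliString n (fun j => padd (s j) (s' j))).mulVec ψ = -ψ := by
  obtain ⟨ε, hε, he⟩ := eigen_of_stab hs
  obtain ⟨ε', hε', he'⟩ := eigen_of_stab hs'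
  set q : Fin n → Fin 4 := fun j => padd (s j) (s' j) with hq
  set γ : ℂ := ∏ j, pphase (s j) (s' j) with hγ
  have hγ0 : γ ≠ 0 := Finset.prod_ne_zero_iff.2 fun j _ => pphase_ne_zero _ _
  have hmv : γ • (PauliString n q).mulVec ψ = (ε' * ε) • ψ := by
    have := congrArg (fun M => Matrix.mulVec M ψ) (PS_mul s s')
    simp only [Matrix.smul_mulVec] at this
    rw [← this, ← Matrix.mulVec_mulVec, he', Matrix.mulVec_smul, he, smul_smul]
  have hlam : (PauliString n q).mulVec ψ = (γ⁻¹ * (ε' * ε)) • ψ := by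
    have h := congrArg (fun v => γ⁻¹ • v) hmv
    simpa [smul_smul, inv_mul_cancel₀ hγ0] using h
  set lam : ℂ := γ⁻¹ * (ε' * ε) with hl
  have hsq : lam * lam = 1 := by
    have h1 : (PauliString n q).mulVec ((PauliString n q).mulVec ψ) = ψ := by
      rw [Matrix.mulVec_mulVec, PS_sq, Matrix.one_mulVec]
    rw [hlam, Matrix.mulVec_smul, hlam, smul_smul] at h1
    have h2 : (lam * lam - 1) • ψ = 0 := by
      rw [sub_smul, h1, one_smul, sub_self]
    rcases smul_eq_zero.mp h2 with h3 | h3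
    · linear_combination h3
    · exact absurd h3 (psi_ne_zero hψ)
  rcases mul_self_eq_one_iff.mp hsq with h | h
  · left; rw [hlam, h, one_smul]
  · right; rw [hlam, h]; simp

lemma comm_one_of_nonzero (hψ : star ψ ⬝ᵥ ψ = 1) {a s : Fin n → Fin 4}
    (ha : star ψ ⬝ᵥ (PauliString n a).mulVec ψ ≠ 0)
    (hs : (PauliString n s).mulVec ψ = ψ ∨ (PauliString n s).mulVec ψ = -ψ) :
    (∏ j, pcomm (a j) (s j)) = 1 := by
  obtain ⟨ε, hε, he⟩ := eigen_of_stab hs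
  set σ : ℂ := ((∏ j, pcomm (a j) (s j) : ℤ) : ℂ) with hσ
  set t : ℂ := star ψ ⬝ᵥ (PauliString n a).mulVec ψ with ht
  have hεstar : star ε = ε := by rcases hε with h | h <;> simp [h]
  have hε0 : ε ≠ 0 := by rcases hε with h | h <;> simp [h]
  -- star ψ ᵥ* P_s = ε • star ψ
  have hrow : Matrix.vecMul (star ψ) (PauliString n s) = ε • star ψ := by
    have h1 : star ((PauliString n s).mulVec ψ) = Matrix.vecMul (star ψ) (PauliString n s) := by
      rw [Matrix.star_mulVec, PS_herm]
    rw [← h1, he, star_smul, hεstar]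
  have key : ε * t = ε * (σ * t) := by
    have h1 : (PauliString n a * PauliString n s).mulVec ψ = ε • (PauliString n a).mulVec ψ := by
      rw [← Matrix.mulVec_mulVec, he, Matrix.mulVec_smul]
    have h2 : (PauliString n a * PauliString n s).mulVec ψ
        = σ • (PauliString n s).mulVec ((PauliString n a).mulVec ψ) := by
      rw [PS_commute a s, Matrix.smul_mulVec, Matrix.mulVec_mulVec]
    have h3 : star ψ ⬝ᵥ (ε • (PauliString n a).mulVec ψ) = ε * t := by
      rw [dotProduct_smul, ht, smul_eq_mul]
    have h4 : star ψ ⬝ᵥ (σ • (PauliString n s).mulVec ((PauliString n a).mulVec ψ)) = ε * (σ * t) := by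
      rw [dotProduct_smul, smul_eq_mul, Matrix.dotProduct_mulVec, hrow,
        smul_dotProduct, smul_eq_mul, ← ht]
      ring
    rw [← h3, ← h1, h2, h4]
  have hσ1 : σ = 1 := by
    have h5 : t = σ * t := mul_left_cancel₀ hε0 key
    have h6 : (σ - 1) * t = 0 := by linear_combination -h5
    rcases mul_eq_zero.mp h6 with h7 | h7
    · linear_combination h7
    · exact absurd h7 ha
  rw [hσ] at hσ1
  exact_mod_cast hσ1

lemma char_sum_nonneg (T : Finset (Fin n → Fin 4))
    (hT : ∀ s ∈ T, ∀ t ∈ T, (fun j => padd (s j) (t j)) ∈ T) (a : Fin n → Fin 4) :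
    0 ≤ ∑ s ∈ T, ∏ j, pcomm (a j) (s j) := by
  by_cases h : ∀ s ∈ T, (∏ j, pcomm (a j) (s j)) = 1
  · rw [Finset.sum_congr rfl h]
    simp
  · push_neg at h
    obtain ⟨t₀, ht₀, hne⟩ := h
    have hval : ∀ s : Fin n → Fin 4, (∏ j, pcomm (a j) (s j)) = 1 ∨ (∏ j, pcomm (a j) (s j)) = -1 := by
      intro s
      apply mul_self_eq_one_iff.mp
      rw [← Finset.prod_mul_distrib]
      refine Finset.prod_eq_one fun j _ => ?_
      rcases pcomm_sq (a j) (s j) with h | h <;> rw [h] <;> norm_num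
    have ht0neg : (∏ j, pcomm (a j) (t₀ j)) = -1 := (hval t₀).resolve_left hne
    have hsum : ∑ s ∈ T, ∏ j, pcomm (a j) (s j)
        = ∑ s ∈ T, ∏ j, pcomm (a j) (padd (s j) (t₀ j)) := by
      refine Finset.sum_nbij' (fun s => fun j => padd (s j) (t₀ j))
        (fun s => fun j => padd (s j) (t₀ j)) ?_ ?_ ?_ ?_ ?_
      · intro s hsm; exact hT s hsm t₀ ht₀
      · intro s hsm; exact hT s hsm t₀ ht₀
      · intro s hsm; funext j; exact padd_cancel _ _
      · intro s hsm; funext j; exact padd_cancel _ _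
      · intro s hsm
        refine Finset.prod_congr rfl fun j _ => ?_
        rw [padd_cancel]
    have hneg : ∑ s ∈ T, ∏ j, pcomm (a j) (s j) = - ∑ s ∈ T, ∏ j, pcomm (a j) (s j) := by
      nth_rewrite 1 [hsum]
      rw [← Finset.sum_neg_distrib]
      refine Finset.sum_congr rfl fun s _ => ?_
      have : ∀ j, pcomm (a j) (padd (s j) (t₀ j)) = pcomm (a j) (s j) * pcomm (a j) (t₀ j) :=
        fun j => pcomm_hom _ _ _
      rw [Finset.prod_congr rfl fun j _ => this j, Finset.prod_mul_distrib, ht0neg]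
      ring
    have : ∑ s ∈ T, ∏ j, pcomm (a j) (s j) = 0 := by linarith [hneg]
    rw [this]

end Main

lemma count_le {n : ℕ} (Cfin Sfin : Finset (Fin n → Fin 4))
    (hsub : ∀ s ∈ Sfin, ∀ t ∈ Sfin, (fun j => padd (s j) (t j)) ∈ Sfin)
    (hone : ∀ a ∈ Cfin, ∀ s ∈ Sfin, (∏ j, pcomm (a j) (s j)) = 1) :
    (Cfin.card : ℤ) * Sfin.card ≤ 4 ^ n := by
  calc (Cfin.card : ℤ) * Sfin.card
      = ∑ _a ∈ Cfin, (Sfin.card : ℤ) := by rw [Finset.sum_const, nsmul_eq_mul]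
    _ = ∑ a ∈ Cfin, ∑ s ∈ Sfin, ∏ j, pcomm (a j) (s j) := by
        refine Finset.sum_congr rfl fun a ha => ?_
        rw [Finset.sum_congr rfl (hone a ha)]
        simp
    _ ≤ ∑ a : Fin n → Fin 4, ∑ s ∈ Sfin, ∏ j, pcomm (a j) (s j) :=
        Finset.sum_le_sum_of_subset_of_nonneg (Finset.subset_univ _)
          (fun a _ _ => char_sum_nonneg Sfin hsub a)
    _ = ∑ s ∈ Sfin, ∑ a : Fin n → Fin 4, ∏ j, pcomm (a j) (s j) := Finset.sum_comm
    _ = ∑ s ∈ Sfin, ∏ j, (if s j = 0 then (4:ℤ) else 0) := by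
        refine Finset.sum_congr rfl fun s _ => ?_
        rw [sum_prod_eval (fun j k => pcomm k (s j))]
        exact Finset.prod_congr rfl fun j _ => pcomm_colsum (s j)
    _ ≤ ∑ s : Fin n → Fin 4, ∏ j, (if s j = 0 then (4:ℤ) else 0) :=
        Finset.sum_le_sum_of_subset_of_nonneg (Finset.subset_univ _)
          (fun s _ _ => Finset.prod_nonneg fun j _ => by split <;> norm_num)
    _ = ∏ j : Fin n, ∑ k : Fin 4, (if k = 0 then (4:ℤ) else 0) :=
        sum_prod_eval (fun (_ : Fin n) (k : Fin 4) => if k = 0 then (4:ℤ) else 0)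
    _ = 4 ^ n := by simp

theorem stmt_5 (n : ℕ) (ψ : (Fin n → Fin 2) → ℂ) (hψ : star ψ ⬝ᵥ ψ = 1) :
    Real.log ((Set.ncard {a : Fin n → Fin 4 |
        star ψ ⬝ᵥ (PauliString n a).mulVec ψ ≠ 0} : ℝ) / (2 ^ n : ℝ)) ≤
    Real.log ((2 ^ n : ℝ) / (Set.ncard {a : Fin n → Fin 4 |
        (PauliString n a).mulVec ψ = ψ ∨ (PauliString n a).mulVec ψ = -ψ} : ℝ)) := by
  classical
  set Cset : Set (Fin n → Fin 4) :=
    {a | star ψ ⬝ᵥ (PauliString n a).mulVec ψ ≠ 0} with hCset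
  set Sset : Set (Fin n → Fin 4) :=
    {a | (PauliString n a).mulVec ψ = ψ ∨ (PauliString n a).mulVec ψ = -ψ} with hSset
  have hCfin : Cset.Finite := Set.toFinite _
  have hSfin : Sset.Finite := Set.toFinite _
  have hcardC : Cset.ncard = hCfin.toFinset.card := Set.ncard_eq_toFinset_card _ hCfin
  have hcardS : Sset.ncard = hSfin.toFinset.card := Set.ncard_eq_toFinset_card _ hSfin
  have hzeroC : (fun _ => (0 : Fin 4)) ∈ Cset := by
    simp only [hCset, Set.mem_setOf_eq, PS_zero, Matrix.one_mulVec, hψ]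
    norm_num
  have hzeroS : (fun _ => (0 : Fin 4)) ∈ Sset := by
    refine Set.mem_setOf.mpr (Or.inl ?_)
    rw [PS_zero, Matrix.one_mulVec]
  have hCpos : 0 < hCfin.toFinset.card := by
    rw [Finset.card_pos]
    exact ⟨_, hCfin.mem_toFinset.mpr hzeroC⟩
  have hSpos : 0 < hSfin.toFinset.card := by
    rw [Finset.card_pos]
    exact ⟨_, hSfin.mem_toFinset.mpr hzeroS⟩
  have hint : (hCfin.toFinset.card : ℤ) * hSfin.toFinset.card ≤ 4 ^ n := by
    refine count_le _ _ ?_ ?_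
    · intro s hs t ht
      rw [hSfin.mem_toFinset] at hs ht ⊢
      exact stab_closed hψ hs ht
    · intro a ha s hs
      rw [hCfin.mem_toFinset] at ha
      rw [hSfin.mem_toFinset] at hs
      exact comm_one_of_nonzero hψ ha hs
  rw [hcardC, hcardS]
  have h2n : (0:ℝ) < 2 ^ n := by positivity
  have hCr : (0:ℝ) < (hCfin.toFinset.card : ℝ) := by exact_mod_cast hCpos
  have hSr : (0:ℝ) < (hSfin.toFinset.card : ℝ) := by exact_mod_cast hSpos
  apply Real.log_le_log (by positivity)
  rw [div_le_div_iff₀ h2n hSr]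
  have hr : (hCfin.toFinset.card : ℝ) * hSfin.toFinset.card ≤ 4 ^ n := by
    exact_mod_cast hint
  calc (hCfin.toFinset.card : ℝ) * hSfin.toFinset.card ≤ 4 ^ n := hr
    _ = 2 ^ n * 2 ^ n := by rw [← mul_pow]; norm_num
end

section
/- The stabilizer α-Rényi entropy of n copies of the magic state satisfies M_α(|H⟩^{⊗n}) = n·(1-α)^{-1}·( log₂(2^{1-α} + 1) − 1 ) (in base-2 logarithm), obtained from M_α = (1-α)^{-1} log Σ_{k=0}^{n} C(n,k) 2^k 2^{-α(n+k)} − n. -/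
/-!
The state |H⟩^{⊗n} and every Pauli string are tensor products, so the expectation
⟨H|^{⊗n} P |H⟩^{⊗n} factorizes into single-qubit expectations, whose squares are 1, 1/2, 1/2, 0
for P = I, X, Y, Z. Hence Σ_P Ξ_P^α = 2^{-αn} (1 + 2·2^{-α})^n = 2^{-αn} (2^{1-α} + 1)^n, and the
binomial theorem expands the same number as Σ_k C(n,k) 2^k 2^{-α(n+k)}. Taking log₂ gives both
formulas.
-/

open Matrix BigOperators

/-- The single-qubit magic state |H⟩ = (|0⟩ + e^{iπ/4}|1⟩)/√2. -/
noncomputable def Hstate : Fin 2 → ℂ :=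
  ![(1 : ℂ) / Real.sqrt 2, Complex.exp (Complex.I * (Real.pi / 4)) / Real.sqrt 2]

/-- The n-fold tensor power |H⟩^{⊗n}. -/
noncomputable def HTensor (n : ℕ) : (Fin n → Fin 2) → ℂ :=
  fun x => ∏ j, Hstate (x j)

/-- Ξ_P(|H⟩^{⊗n}) = d⁻¹ ⟨H|^{⊗n} P |H⟩^{⊗n}², the squared (normalized) Pauli
expectation of the n-fold magic state (the expectations are real, so the square
is the norm-square). -/
noncomputable def XiH (n : ℕ) (a : Fin n → Fin 4) : ℝ :=
  ((2 : ℝ) ^ n)⁻¹ *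
    Complex.normSq (star (HTensor n) ⬝ᵥ (PauliString n a).mulVec (HTensor n))

theorem prod_dotProduct_mulVec_prod {ι κ R : Type*} [Fintype ι] [DecidableEq ι] [Fintype κ]
    [CommSemiring R] (u v : ι → κ → R) (M : ι → Matrix κ κ R) :
    (fun x : ι → κ => ∏ j, u j (x j)) ⬝ᵥ
        (Matrix.of fun x y : ι → κ => ∏ j, M j (x j) (y j)) *ᵥ (fun y => ∏ j, v j (y j)) =
      ∏ j, u j ⬝ᵥ M j *ᵥ v j := by
  simp only [dotProduct, mulVec, Fintype.prod_sum, Finset.prod_mul_distrib]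
  simp only [Matrix.of_apply, ← Finset.prod_mul_distrib]

open Complex in
theorem Hstate_eq : Hstate = ![((√2 / 2 : ℝ) : ℂ), (1 + I) / 2] := by
  have hexp : exp (I * (Real.pi / 4)) = ((√2 / 2 : ℝ) : ℂ) * (1 + I) := by
    rw [mul_comm, exp_mul_I, ← ofReal_ofNat, ← ofReal_div, ← ofReal_cos, ← ofReal_sin,
      Real.cos_pi_div_four, Real.sin_pi_div_four]
    ring
  have hsq : (√2 : ℂ) ^ 2 = 2 := by exact_mod_cast Real.sq_sqrt zero_le_two
  ext i
  fin_cases i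
  · simp only [Hstate]; push_cast; field_simp; linear_combination -hsq
  · simp only [Hstate, hexp]; push_cast; field_simp

open Complex in
theorem star_Hstate_dotProduct_pauli_mulVec (i : Fin 4) :
    star Hstate ⬝ᵥ pauli i *ᵥ Hstate = ![1, ((√2 / 2 : ℝ) : ℂ), ((√2 / 2 : ℝ) : ℂ), 0] i := by
  have hsq : (√2 : ℂ) ^ 2 = 2 := by exact_mod_cast Real.sq_sqrt zero_le_two
  fin_cases i <;> simp [Hstate_eq, pauli, dotProduct, mulVec, Fin.sum_univ_two, map_ofNat]
  · linear_combination (hsq - I_sq) / 4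
  · ring
  · linear_combination -(√2 : ℂ) / 2 * I_sq
  · linear_combination (hsq + I_sq) / 4

noncomputable def magicWeight : Fin 4 → ℝ := ![1, 1 / 2, 1 / 2, 0]

theorem magicWeight_nonneg (i : Fin 4) : 0 ≤ magicWeight i := by
  fin_cases i <;> norm_num [magicWeight]

theorem normSq_star_Hstate_dotProduct_pauli_mulVec (i : Fin 4) :
    Complex.normSq (star Hstate ⬝ᵥ pauli i *ᵥ Hstate) = magicWeight i := by
  rw [star_Hstate_dotProduct_pauli_mulVec]
  fin_cases i <;> simp [magicWeight, Complex.normSq_ofReal]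

theorem XiH_eq_prod_magicWeight (n : ℕ) (a : Fin n → Fin 4) :
    XiH n a = ((2 : ℝ) ^ n)⁻¹ * ∏ j, magicWeight (a j) := by
  have hstar : star (HTensor n) = fun x => ∏ j, star Hstate (x j) := by
    ext x; simp [HTensor]
  rw [XiH, hstar]
  unfold HTensor PauliString
  rw [prod_dotProduct_mulVec_prod, map_prod]
  simp only [normSq_star_Hstate_dotProduct_pauli_mulVec]

theorem sum_magicWeight_rpow {α : ℝ} (hα : 0 < α) :
    ∑ i, magicWeight i ^ α = (2 : ℝ) ^ (1 - α) + 1 := by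
  simp [magicWeight, Fin.sum_univ_four, Real.zero_rpow hα.ne', Real.inv_rpow zero_le_two,
    Real.rpow_sub two_pos]
  ring

theorem sum_XiH_rpow (n : ℕ) {α : ℝ} (hα : 0 < α) :
    ∑ a, XiH n a ^ α = (2 : ℝ) ^ (-(α * n)) * ((2 : ℝ) ^ (1 - α) + 1) ^ n := by
  have hscale : (((2 : ℝ) ^ n)⁻¹) ^ α = (2 : ℝ) ^ (-(α * n)) := by
    rw [Real.inv_rpow (by positivity), ← Real.rpow_natCast, ← Real.rpow_mul zero_le_two,
      Real.rpow_neg zero_le_two, mul_comm]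
  have hterm : ∀ a : Fin n → Fin 4,
      XiH n a ^ α = (2 : ℝ) ^ (-(α * n)) * ∏ j, magicWeight (a j) ^ α := fun a => by
    rw [XiH_eq_prod_magicWeight, Real.mul_rpow (by positivity)
      (Finset.prod_nonneg fun j _ => magicWeight_nonneg _), hscale,
      Real.finsetProd_rpow _ _ fun j _ => magicWeight_nonneg _]
  simp_rw [hterm, ← Finset.mul_sum]
  rw [← Fintype.sum_pow (fun i => magicWeight i ^ α), sum_magicWeight_rpow hα]

theorem sum_choose_mul_rpow (n : ℕ) (α : ℝ) :
    ∑ k ∈ Finset.range (n + 1), (n.choose k : ℝ) * 2 ^ k * (2 : ℝ) ^ (-(α * (n + k))) =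
      (2 : ℝ) ^ (-(α * n)) * ((2 : ℝ) ^ (1 - α) + 1) ^ n := by
  rw [add_pow, Finset.mul_sum]
  refine Finset.sum_congr rfl fun k _ => ?_
  have hsplit : (2 : ℝ) ^ (-(α * (n + k))) = (2 : ℝ) ^ (-(α * n)) * ((2 : ℝ) ^ (-α)) ^ k := by
    rw [← Real.rpow_natCast, ← Real.rpow_mul zero_le_two, ← Real.rpow_add two_pos]
    ring_nf
  have hpow : ((2 : ℝ) ^ (1 - α)) ^ k = 2 ^ k * ((2 : ℝ) ^ (-α)) ^ k := by
    rw [Real.rpow_sub two_pos, Real.rpow_one, Real.rpow_neg zero_le_two, div_eq_mul_inv,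
      mul_pow]
  rw [hsplit, hpow, one_pow]
  ring

/-- M_α(|H⟩^{⊗n}) = (1-α)⁻¹ log₂ ∑_k C(n,k) 2^k 2^{-α(n+k)} − n
  = n (1-α)⁻¹ (log₂(2^{1-α}+1) − 1), where
M_α(|ψ⟩) = (1-α)⁻¹ log₂(∑_P Ξ_P^α) − log₂ d, logs base 2. -/
theorem stmt_7 (n : ℕ) (α : ℝ) (hα : 0 < α) (hα1 : α ≠ 1) :
    (1 - α)⁻¹ * Real.logb 2 (∑ a : Fin n → Fin 4, (XiH n a) ^ α) - n =
      (1 - α)⁻¹ * Real.logb 2 (∑ k ∈ Finset.range (n + 1),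
        (n.choose k : ℝ) * 2 ^ k * (2 : ℝ) ^ (-(α * (n + k)))) - n ∧
    (1 - α)⁻¹ * Real.logb 2 (∑ a : Fin n → Fin 4, (XiH n a) ^ α) - n =
      n * ((1 - α)⁻¹ * (Real.logb 2 ((2 : ℝ) ^ (1 - α) + 1) - 1)) := by
  rw [sum_XiH_rpow n hα, sum_choose_mul_rpow]
  refine ⟨rfl, ?_⟩
  have h1α : 1 - α ≠ 0 := sub_ne_zero.mpr hα1.symm
  rw [Real.logb_mul (by positivity) (by positivity), Real.logb_rpow two_pos (by norm_num),
    Real.logb_pow]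
  field_simp
  ring
end

section
/- The extended stabilizer 2-Rényi entropy for mixed states, M̃₂(ρ) := −log( Σ_P tr(Pρ)⁴ / Σ_P tr(Pρ)² ), vanishes on every mixed stabilizer state χ = I/d + d^{-1} Σ_{P∈G} φ_P P with φ_P ∈ {±1} and G a subset of Pauli strings with 0 < |G| < d−1 making χ positive semidefinite. -/
open Matrix BigOperators
open scoped ComplexOrder

/-! By orthogonality of the Pauli strings, `tr (P i * χ)` is the coefficient of `P i` in `χ`:
`1` at the identity, `φ i = ±1` on `G` and `0` elsewhere. Every even power sum of these
coefficients therefore counts `{I} ∪ G`, so the ratio inside the logarithm is `1`. -/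

section PauliExpansion

variable {ι m : Type*} [Fintype m] [DecidableEq ι] {d : ℕ} {P : ι → Matrix m m ℂ}

theorem trace_mul_sum_smul_of_orthogonal
    (horth : ∀ i j, trace (P i * P j) = if i = j then (d : ℂ) else 0)
    (s : Finset ι) (c : ι → ℂ) (i : ι) :
    trace (P i * ∑ j ∈ s, c j • P j) = if i ∈ s then d * c i else 0 := by
  simp only [Matrix.mul_sum, Matrix.mul_smul, trace_sum, trace_smul, horth, smul_eq_mul,
    mul_ite, mul_zero, Finset.sum_ite_eq]
  split_ifs <;> ring

theorem trace_mul_identity_add_sum_smul_of_orthogonal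
    (horth : ∀ i j, trace (P i * P j) = if i = j then (d : ℂ) else 0) (hd : (d : ℂ) ≠ 0)
    (i₀ : ι) (s : Finset ι) (c : ι → ℂ) (i : ι) :
    trace (P i * ((d : ℂ)⁻¹ • P i₀ + (d : ℂ)⁻¹ • ∑ j ∈ s, c j • P j)) =
      (if i = i₀ then 1 else 0) + if i ∈ s then c i else 0 := by
  rw [Matrix.mul_add, Matrix.mul_smul, Matrix.mul_smul, trace_add, trace_smul, trace_smul,
    horth, trace_mul_sum_smul_of_orthogonal horth]
  split_ifs <;> simp [hd]

end PauliExpansion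

theorem Finset.sum_pow_mul_eq_card_of_sq_eq_one {ι : Type*} [Fintype ι] (S : Finset ι)
    {a : ι → ℝ} (ha_sq : ∀ i ∈ S, a i ^ 2 = 1) (ha_zero : ∀ i ∉ S, a i = 0)
    {k : ℕ} (hk : k ≠ 0) :
    ∑ i, a i ^ (2 * k) = S.card := by
  rw [← Finset.sum_subset (Finset.subset_univ S) fun i _ hi => by simp [ha_zero i hi, hk]]
  simp +contextual [pow_mul, ha_sq]

theorem stmt_10_general (d : ℕ)
    (P : Fin (d ^ 2) → Matrix (Fin d) (Fin d) ℂ)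
    (horth : ∀ i j, Matrix.trace (P i * P j) = if i = j then (d : ℂ) else 0)
    (i₀ : Fin (d ^ 2)) (hP0 : P i₀ = 1)
    (G : Finset (Fin (d ^ 2))) (hG0 : i₀ ∉ G)
    (φ : Fin (d ^ 2) → ℝ) (hφ : ∀ i ∈ G, φ i = 1 ∨ φ i = -1)
    (χ : Matrix (Fin d) (Fin d) ℂ)
    (hχ : χ = (d : ℂ)⁻¹ • (1 : Matrix (Fin d) (Fin d) ℂ) +
        (d : ℂ)⁻¹ • ∑ i ∈ G, (φ i : ℂ) • P i) :
    -Real.log ((∑ i, ((Matrix.trace (P i * χ)).re) ^ 4) /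
        (∑ i, ((Matrix.trace (P i * χ)).re) ^ 2)) = 0 := by
  have hd : (d : ℂ) ≠ 0 := by
    have : d ^ 2 ≠ 0 := i₀.pos.ne'
    exact_mod_cast pow_ne_zero_iff two_ne_zero |>.mp this
  set a : Fin (d ^ 2) → ℝ := fun i => (if i = i₀ then 1 else 0) + if i ∈ G then φ i else 0
  have htr : ∀ i, (trace (P i * χ)).re = a i := fun i => by
    rw [hχ, ← hP0, trace_mul_identity_add_sum_smul_of_orthogonal horth hd]
    split_ifs <;> simp_all [a]
  have ha_sq : ∀ i ∈ insert i₀ G, a i ^ 2 = 1 := by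
    intro i hi
    rcases Finset.mem_insert.mp hi with rfl | hiG
    · simp [a, hG0]
    · rcases hφ i hiG with h | h <;> simp [a, ne_of_mem_of_not_mem hiG hG0, hiG, h]
  have ha_zero : ∀ i ∉ insert i₀ G, a i = 0 := fun i hi => by
    simp_all [a, Finset.mem_insert]
  simp only [htr]
  rw [Finset.sum_pow_mul_eq_card_of_sq_eq_one _ ha_sq ha_zero (k := 2) two_ne_zero,
    Finset.sum_pow_mul_eq_card_of_sq_eq_one _ ha_sq ha_zero (k := 1) one_ne_zero,
    div_self (by simp), Real.log_one, neg_zero]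

/-- The extended stabilizer 2-Rényi entropy
M̃₂(ρ) = −log(∑_P tr(Pρ)⁴ / ∑_P tr(Pρ)²) vanishes on every mixed stabilizer state
χ = I/d + d⁻¹ ∑_{P∈G} φ_P P with signs φ_P = ±1, G a set of non-identity Pauli
strings with 0 < |G| < d−1, and χ positive semidefinite. -/
theorem stmt_10 (n : ℕ) (hn : 1 ≤ n) (d : ℕ) (hd : d = 2 ^ n)
    (P : Fin (d ^ 2) → Matrix (Fin d) (Fin d) ℂ)
    (hherm : ∀ i, (P i).IsHermitian)
    (hsq : ∀ i, P i * P i = 1)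
    (horth : ∀ i j, Matrix.trace (P i * P j) = if i = j then (d : ℂ) else 0)
    (i₀ : Fin (d ^ 2)) (hP0 : P i₀ = 1)
    (G : Finset (Fin (d ^ 2))) (hG0 : i₀ ∉ G)
    (hGlb : 0 < G.card) (hGub : G.card < d - 1)
    (φ : Fin (d ^ 2) → ℝ) (hφ : ∀ i ∈ G, φ i = 1 ∨ φ i = -1)
    (χ : Matrix (Fin d) (Fin d) ℂ)
    (hχ : χ = (d : ℂ)⁻¹ • (1 : Matrix (Fin d) (Fin d) ℂ) +
        (d : ℂ)⁻¹ • ∑ i ∈ G, (φ i : ℂ) • P i)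
    (hpsd : χ.PosSemidef) :
    -Real.log ((∑ i, ((Matrix.trace (P i * χ)).re) ^ 4) /
        (∑ i, ((Matrix.trace (P i * χ)).re) ^ 2)) = 0 :=
  stmt_10_general d P horth i₀ hP0 G hG0 φ hφ χ hχ
end

section
/- The mixed-state stabilizer 2-Rényi entropy M̃₂(ρ) = −log( Σ_P tr(Pρ)⁴ / Σ_P tr(Pρ)² ) is additive: M̃₂(ρ⊗σ) = M̃₂(ρ) + M̃₂(σ). In particular, M̃₂(ρ⊗S) = M̃₂(ρ) for any stabilizer state S. -/
set_option maxHeartbeats 800000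


open Matrix BigOperators Kronecker
open scoped ComplexOrder

/-- The mixed-state stabilizer 2-Rényi entropy
M̃₂(ρ) = −log(∑_P tr(Pρ)⁴ / ∑_P tr(Pρ)²) is additive under tensor products:
M̃₂(ρ⊗σ) = M̃₂(ρ) + M̃₂(σ); in particular M̃₂(ρ⊗S) = M̃₂(ρ) whenever M̃₂(S) = 0
(e.g. S a stabilizer state). -/
theorem stmt_12 (n₁ n₂ : ℕ) (hn₁ : 1 ≤ n₁) (hn₂ : 1 ≤ n₂)
    (d₁ d₂ : ℕ) (hd₁ : d₁ = 2 ^ n₁) (hd₂ : d₂ = 2 ^ n₂)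
    (P₁ : Fin (d₁ ^ 2) → Matrix (Fin d₁) (Fin d₁) ℂ)
    (P₂ : Fin (d₂ ^ 2) → Matrix (Fin d₂) (Fin d₂) ℂ)
    (hherm₁ : ∀ i, (P₁ i).IsHermitian) (hherm₂ : ∀ j, (P₂ j).IsHermitian)
    (hsq₁ : ∀ i, P₁ i * P₁ i = 1) (hsq₂ : ∀ j, P₂ j * P₂ j = 1)
    (horth₁ : ∀ i j, Matrix.trace (P₁ i * P₁ j) = if i = j then (d₁ : ℂ) else 0)
    (horth₂ : ∀ i j, Matrix.trace (P₂ i * P₂ j) = if i = j then (d₂ : ℂ) else 0)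
    (i₀₁ : Fin (d₁ ^ 2)) (hP01 : P₁ i₀₁ = 1)
    (i₀₂ : Fin (d₂ ^ 2)) (hP02 : P₂ i₀₂ = 1)
    (ρ : Matrix (Fin d₁) (Fin d₁) ℂ) (σ : Matrix (Fin d₂) (Fin d₂) ℂ)
    (hρ : ρ.PosSemidef) (hσ : σ.PosSemidef)
    (htrρ : Matrix.trace ρ = 1) (htrσ : Matrix.trace σ = 1) :
    (-Real.log ((∑ p : Fin (d₁ ^ 2) × Fin (d₂ ^ 2),
          ((Matrix.trace ((P₁ p.1 ⊗ₖ P₂ p.2) * (ρ ⊗ₖ σ))).re) ^ 4) /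
        (∑ p : Fin (d₁ ^ 2) × Fin (d₂ ^ 2),
          ((Matrix.trace ((P₁ p.1 ⊗ₖ P₂ p.2) * (ρ ⊗ₖ σ))).re) ^ 2)) =
      -Real.log ((∑ i, ((Matrix.trace (P₁ i * ρ)).re) ^ 4) /
          (∑ i, ((Matrix.trace (P₁ i * ρ)).re) ^ 2)) +
      -Real.log ((∑ j, ((Matrix.trace (P₂ j * σ)).re) ^ 4) /
          (∑ j, ((Matrix.trace (P₂ j * σ)).re) ^ 2))) ∧
    (-Real.log ((∑ j, ((Matrix.trace (P₂ j * σ)).re) ^ 4) /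
          (∑ j, ((Matrix.trace (P₂ j * σ)).re) ^ 2)) = 0 →
      -Real.log ((∑ p : Fin (d₁ ^ 2) × Fin (d₂ ^ 2),
            ((Matrix.trace ((P₁ p.1 ⊗ₖ P₂ p.2) * (ρ ⊗ₖ σ))).re) ^ 4) /
          (∑ p : Fin (d₁ ^ 2) × Fin (d₂ ^ 2),
            ((Matrix.trace ((P₁ p.1 ⊗ₖ P₂ p.2) * (ρ ⊗ₖ σ))).re) ^ 2)) =
        -Real.log ((∑ i, ((Matrix.trace (P₁ i * ρ)).re) ^ 4) /
            (∑ i, ((Matrix.trace (P₁ i * ρ)).re) ^ 2))) := by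
  -- traces of (Pauli * state) are real
  have him₁ : ∀ i, (Matrix.trace (P₁ i * ρ)).im = 0 := by
    intro i
    have h : (starRingEnd ℂ) (Matrix.trace (P₁ i * ρ)) = Matrix.trace (P₁ i * ρ) := by
      calc (starRingEnd ℂ) (Matrix.trace (P₁ i * ρ))
          = Matrix.trace ((P₁ i * ρ)ᴴ) := (Matrix.trace_conjTranspose _).symm
        _ = Matrix.trace (ρᴴ * (P₁ i)ᴴ) := by rw [Matrix.conjTranspose_mul]
        _ = Matrix.trace (ρ * P₁ i) := by rw [hρ.1, (hherm₁ i)]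
        _ = Matrix.trace (P₁ i * ρ) := Matrix.trace_mul_comm _ _
    exact Complex.conj_eq_iff_im.mp h
  have him₂ : ∀ j, (Matrix.trace (P₂ j * σ)).im = 0 := by
    intro j
    have h : (starRingEnd ℂ) (Matrix.trace (P₂ j * σ)) = Matrix.trace (P₂ j * σ) := by
      calc (starRingEnd ℂ) (Matrix.trace (P₂ j * σ))
          = Matrix.trace ((P₂ j * σ)ᴴ) := (Matrix.trace_conjTranspose _).symm
        _ = Matrix.trace (σᴴ * (P₂ j)ᴴ) := by rw [Matrix.conjTranspose_mul]
        _ = Matrix.trace (σ * P₂ j) := by rw [hσ.1, (hherm₂ j)]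
        _ = Matrix.trace (P₂ j * σ) := Matrix.trace_mul_comm _ _
    exact Complex.conj_eq_iff_im.mp h
  -- factorization of the joint trace
  have hkron : ∀ (a : Fin (d₁ ^ 2)) (b : Fin (d₂ ^ 2)),
      (Matrix.trace ((P₁ a ⊗ₖ P₂ b) * (ρ ⊗ₖ σ))).re
        = (Matrix.trace (P₁ a * ρ)).re * (Matrix.trace (P₂ b * σ)).re := by
    intro a b
    rw [← Matrix.mul_kronecker_mul, Matrix.trace_kronecker, Complex.mul_re,
      him₁ a, him₂ b]
    ring
  set A := ∑ i, ((Matrix.trace (P₁ i * ρ)).re) ^ 4 with hA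
  set B := ∑ i, ((Matrix.trace (P₁ i * ρ)).re) ^ 2 with hB
  set C := ∑ j, ((Matrix.trace (P₂ j * σ)).re) ^ 4 with hC
  set D := ∑ j, ((Matrix.trace (P₂ j * σ)).re) ^ 2 with hD
  have hsum4 : (∑ p : Fin (d₁ ^ 2) × Fin (d₂ ^ 2),
      ((Matrix.trace ((P₁ p.1 ⊗ₖ P₂ p.2) * (ρ ⊗ₖ σ))).re) ^ 4) = A * C := by
    rw [hA, hC, Finset.sum_mul_sum, Fintype.sum_prod_type]
    exact Finset.sum_congr rfl fun a _ => Finset.sum_congr rfl fun b _ => by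
      rw [hkron a b]; ring
  have hsum2 : (∑ p : Fin (d₁ ^ 2) × Fin (d₂ ^ 2),
      ((Matrix.trace ((P₁ p.1 ⊗ₖ P₂ p.2) * (ρ ⊗ₖ σ))).re) ^ 2) = B * D := by
    rw [hB, hD, Finset.sum_mul_sum, Fintype.sum_prod_type]
    exact Finset.sum_congr rfl fun a _ => Finset.sum_congr rfl fun b _ => by
      rw [hkron a b]; ring
  -- positivity
  have hx0 : (Matrix.trace (P₁ i₀₁ * ρ)).re = 1 := by
    rw [hP01, one_mul, htrρ]; rfl
  have hy0 : (Matrix.trace (P₂ i₀₂ * σ)).re = 1 := by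
    rw [hP02, one_mul, htrσ]; rfl
  have hApos : 0 < A := by
    have := Finset.single_le_sum
      (f := fun i => ((Matrix.trace (P₁ i * ρ)).re) ^ 4)
      (fun i _ => by positivity) (Finset.mem_univ i₀₁)
    simp only [hx0] at this; norm_num at this; linarith
  have hBpos : 0 < B := by
    have := Finset.single_le_sum
      (f := fun i => ((Matrix.trace (P₁ i * ρ)).re) ^ 2)
      (fun i _ => by positivity) (Finset.mem_univ i₀₁)
    simp only [hx0] at this; norm_num at this; linarith
  have hCpos : 0 < C := by
    have := Finset.single_le_sum
      (f := fun j => ((Matrix.trace (P₂ j * σ)).re) ^ 4)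
      (fun j _ => by positivity) (Finset.mem_univ i₀₂)
    simp only [hy0] at this; norm_num at this; linarith
  have hDpos : 0 < D := by
    have := Finset.single_le_sum
      (f := fun j => ((Matrix.trace (P₂ j * σ)).re) ^ 2)
      (fun j _ => by positivity) (Finset.mem_univ i₀₂)
    simp only [hy0] at this; norm_num at this; linarith
  have hmain : -Real.log ((A * C) / (B * D)) = -Real.log (A / B) + -Real.log (C / D) := by
    rw [mul_div_mul_comm, Real.log_mul (ne_of_gt (div_pos hApos hBpos)) (ne_of_gt (div_pos hCpos hDpos))]
    ring
  rw [hsum4, hsum2]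
  refine ⟨hmain, fun h => ?_⟩
  rw [hmain, h, add_zero]
end

section
/- Averaging a product of Pauli conjugations over the Pauli group gives ⟨P₃ W P₃⟩_{P₃∈P_n} = (I/d)·tr(W) for any d×d matrix W; consequently the 8-point OTOC otoc₈(U) := ⟨d^{-1}tr(P̃₁P₂P₃P₄ P̃₁P₂P₄P₅ P̃₁P₂P₅P₆ P̃₁P₂P₆P₃)⟩_{P₃,P₄,P₅,P₆} equals otoc₂(P̃₁,P₂)⁴ = (d^{-1}tr(P̃₁P₂))⁴. -/
open Matrix BigOperators

/-!
Entrywise, `∑_P P x w * P z y = d * δ(x, y) * δ(w, z)` (for one qubit a check of the four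
Pauli matrices, for `n` qubits its `n`-fold product), hence `∑_P P W P = d tr(W) • 1`.
With `A = P̃₁P₂`, cyclicity of the trace turns each OTOC term into
`tr((P₃AP₃)(P₄AP₄)(P₅AP₅)(P₆AP₆))`, so the quadruple sum is `tr(S⁴)` for the scalar matrix
`S = ∑_P P A P = d tr(A) • 1`.
-/

lemma sum_pauli_apply_mul_pauli_apply (x w z y : Fin 2) :
    ∑ k, pauli k x w * pauli k z y = 2 * (if x = y then 1 else 0) * (if w = z then 1 else 0) := by
  fin_cases x <;> fin_cases w <;> fin_cases z <;> fin_cases y <;>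
    simp [pauli, Fin.sum_univ_four, one_add_one_eq_two]

lemma sum_pauliString_apply_mul_pauliString_apply (n : ℕ) (x w z y : Fin n → Fin 2) :
    ∑ a, PauliString n a x w * PauliString n a z y =
      2 ^ n * (if x = y then 1 else 0) * (if w = z then 1 else 0) := by
  calc ∑ a, PauliString n a x w * PauliString n a z y
      = ∏ j, ∑ k, pauli k (x j) (w j) * pauli k (z j) (y j) := by
        simp only [PauliString, of_apply, ← Finset.prod_mul_distrib, Fintype.prod_sum]
    _ = _ := by
        simp only [sum_pauli_apply_mul_pauli_apply, Finset.prod_mul_distrib, Finset.prod_const,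
          Finset.prod_boole, Finset.mem_univ, true_implies, Finset.card_univ, Fintype.card_fin,
          funext_iff]

lemma sum_pauliString_mul_mul_pauliString (n : ℕ)
    (W : Matrix (Fin n → Fin 2) (Fin n → Fin 2) ℂ) :
    ∑ a, PauliString n a * W * PauliString n a = ((2 : ℂ) ^ n * trace W) • 1 := by
  ext x y
  have entry (a) : (PauliString n a * W * PauliString n a) x y =
      ∑ w, ∑ z, W w z * (PauliString n a x w * PauliString n a z y) := by
    simp only [mul_apply, Finset.sum_mul]
    rw [Finset.sum_comm]
    congr! 2
    ring
  calc (∑ a, PauliString n a * W * PauliString n a) x y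
      = ∑ w, ∑ z, W w z * ∑ a, PauliString n a x w * PauliString n a z y := by
        simp only [Matrix.sum_apply, entry, Finset.mul_sum]
        rw [Finset.sum_comm]
        exact Finset.sum_congr rfl fun w _ => Finset.sum_comm
    _ = _ := by
        simp [sum_pauliString_apply_mul_pauliString_apply, trace, one_apply, Finset.mul_sum,
          mul_comm]

lemma sum_trace_otoc_eq_trace_pow {ι m R : Type*} [Fintype ι] [Fintype m] [DecidableEq m]
    [CommSemiring R] (P : ι → Matrix m m R) (X Y : Matrix m m R) :
    ∑ i, ∑ j, ∑ k, ∑ l,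
      trace (X * Y * P i * P j * X * Y * P j * P k * X * Y * P k * P l * X * Y * P l * P i) =
    trace ((∑ i, P i * (X * Y) * P i) ^ 4) := by
  rw [pow_succ', pow_succ', pow_succ', pow_one]
  simp only [Finset.sum_mul]
  simp only [Finset.mul_sum, trace_sum]
  refine Finset.sum_congr rfl fun i _ => Finset.sum_congr rfl fun j _ =>
    Finset.sum_congr rfl fun k _ => Finset.sum_congr rfl fun l _ => ?_
  rw [trace_mul_comm]
  simp only [Matrix.mul_assoc]

theorem stmt_19_general (n : ℕ) (U : Matrix (Fin n → Fin 2) (Fin n → Fin 2) ℂ)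
    (a₁ a₂ : Fin n → Fin 4) :
    (∀ W : Matrix (Fin n → Fin 2) (Fin n → Fin 2) ℂ,
      ((4 : ℂ) ^ n)⁻¹ • ∑ a : Fin n → Fin 4, PauliString n a * W * PauliString n a =
        (Matrix.trace W / (2 : ℂ) ^ n) • (1 : Matrix (Fin n → Fin 2) (Fin n → Fin 2) ℂ)) ∧
    ((((4 : ℂ) ^ n)⁻¹) ^ 4 *
        ∑ a₃ : Fin n → Fin 4, ∑ a₄ : Fin n → Fin 4, ∑ a₅ : Fin n → Fin 4, ∑ a₆ : Fin n → Fin 4,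
          ((2 : ℂ) ^ n)⁻¹ * Matrix.trace
            ((Uᴴ * PauliString n a₁ * U) * PauliString n a₂ * PauliString n a₃ * PauliString n a₄ *
             (Uᴴ * PauliString n a₁ * U) * PauliString n a₂ * PauliString n a₄ * PauliString n a₅ *
             (Uᴴ * PauliString n a₁ * U) * PauliString n a₂ * PauliString n a₅ * PauliString n a₆ *
             (Uᴴ * PauliString n a₁ * U) * PauliString n a₂ * PauliString n a₆ * PauliString n a₃) =
      (((2 : ℂ) ^ n)⁻¹ * Matrix.trace ((Uᴴ * PauliString n a₁ * U) * PauliString n a₂)) ^ 4) := by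
  have h4 : (4 : ℂ) ^ n = 2 ^ n * 2 ^ n := by rw [← mul_pow]; norm_num
  have h2 : (2 : ℂ) ^ n ≠ 0 := pow_ne_zero _ two_ne_zero
  have htrace_one : trace (1 : Matrix (Fin n → Fin 2) (Fin n → Fin 2) ℂ) = 2 ^ n := by
    simp [trace_one]
  refine ⟨fun W => ?_, ?_⟩
  · rw [sum_pauliString_mul_mul_pauliString, smul_smul, h4]
    congr 1
    field_simp
  · simp only [← Finset.mul_sum]
    rw [sum_trace_otoc_eq_trace_pow, sum_pauliString_mul_mul_pauliString, smul_pow, one_pow,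
      trace_smul, htrace_one, smul_eq_mul, h4]
    field_simp

/-- Averaging Pauli conjugations over the Pauli group depolarizes:
⟨P₃ W P₃⟩_{P₃} = (I/d)·tr(W); consequently the 8-point OTOC
otoc₈(U) = ⟨d⁻¹tr(P̃₁P₂P₃P₄ P̃₁P₂P₄P₅ P̃₁P₂P₅P₆ P̃₁P₂P₆P₃)⟩_{P₃,P₄,P₅,P₆}
equals otoc₂(P̃₁,P₂)⁴ = (d⁻¹tr(P̃₁P₂))⁴, with P̃₁ = U†P₁U. -/
theorem stmt_19 (n : ℕ) (U : Matrix (Fin n → Fin 2) (Fin n → Fin 2) ℂ)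
    (hU : U ∈ Matrix.unitaryGroup (Fin n → Fin 2) ℂ)
    (a₁ a₂ : Fin n → Fin 4) :
    (∀ W : Matrix (Fin n → Fin 2) (Fin n → Fin 2) ℂ,
      ((4 : ℂ) ^ n)⁻¹ • ∑ a : Fin n → Fin 4, PauliString n a * W * PauliString n a =
        (Matrix.trace W / (2 : ℂ) ^ n) • (1 : Matrix (Fin n → Fin 2) (Fin n → Fin 2) ℂ)) ∧
    ((((4 : ℂ) ^ n)⁻¹) ^ 4 *
        ∑ a₃ : Fin n → Fin 4, ∑ a₄ : Fin n → Fin 4, ∑ a₅ : Fin n → Fin 4, ∑ a₆ : Fin n → Fin 4,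
          ((2 : ℂ) ^ n)⁻¹ * Matrix.trace
            ((Uᴴ * PauliString n a₁ * U) * PauliString n a₂ * PauliString n a₃ * PauliString n a₄ *
             (Uᴴ * PauliString n a₁ * U) * PauliString n a₂ * PauliString n a₄ * PauliString n a₅ *
             (Uᴴ * PauliString n a₁ * U) * PauliString n a₂ * PauliString n a₅ * PauliString n a₆ *
             (Uᴴ * PauliString n a₁ * U) * PauliString n a₂ * PauliString n a₆ * PauliString n a₃) =
      (((2 : ℂ) ^ n)⁻¹ * Matrix.trace ((Uᴴ * PauliString n a₁ * U) * PauliString n a₂)) ^ 4) :=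
  stmt_19_general n U a₁ a₂
end
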